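/- arXiv:1207.3622 — 5 statements merged into one kernel-verified Lean document; each statement's English description precedes it below -/
import Mathlib

section
/- Let G be a connected simple graph on a finite vertex type V, let u, v ∈ V and r₁, r₂ ∈ ℕ. If the balls B(u,r₁) and B(v,r₂) are disjoint and there is no edge of G with one endpoint in B(u,r₁) and the other endpoint in B(v,r₂), then dist(u,v) ≥ r₁ + r₂ + 2. -/
/-- The closed ball of radius `r` around `v` in the graph `G`:
all vertices at distance at most `r` from `v`. -/
def SimpleGraph.closedBall {V : Type*} (G : SimpleGraph V) (v : V) (r : ℕ) : Set V :=
  {x | G.dist v x ≤ r}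

namespace SimpleGraph

variable {V : Type*} {G : SimpleGraph V}

lemma mem_closedBall_self (v : V) (r : ℕ) : v ∈ G.closedBall v r := by
  simp [closedBall]

namespace Walk

variable {u v : V}

lemma dist_getVert_le (p : G.Walk u v) (n : ℕ) : G.dist u (p.getVert n) ≤ n :=
  (G.dist_le (p.take n)).trans (by simp [take_length])

lemma dist_getVert_le_length_sub (p : G.Walk u v) (n : ℕ) :
    G.dist (p.getVert n) v ≤ p.length - n :=
  (G.dist_le (p.drop n)).trans_eq (drop_length p n)

lemma exists_adj_closedBall_of_length_le {r₁ r₂ : ℕ} (p : G.Walk u v) (h₁ : r₁ < p.length)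
    (h₂ : p.length ≤ r₁ + r₂ + 1) :
    ∃ x ∈ G.closedBall u r₁, ∃ y ∈ G.closedBall v r₂, G.Adj x y := by
  refine ⟨_, p.dist_getVert_le r₁, p.getVert (r₁ + 1), ?_, p.adj_getVert_succ h₁⟩
  have := p.dist_getVert_le_length_sub (r₁ + 1)
  change G.dist v _ ≤ r₂
  rw [dist_comm]
  omega

end Walk

end SimpleGraph

theorem dist_ge_of_balls_separated_general {V : Type*} (G : SimpleGraph V)
    (hG : G.Connected) (u v : V) (r₁ r₂ : ℕ)
    (hdisj : Disjoint (G.closedBall u r₁) (G.closedBall v r₂))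
    (hedge : ∀ x ∈ G.closedBall u r₁, ∀ y ∈ G.closedBall v r₂, ¬ G.Adj x y) :
    r₁ + r₂ + 2 ≤ G.dist u v := by
  have hr₁ : r₁ < G.dist u v := by
    by_contra! h
    exact hdisj.ne_of_mem h (G.mem_closedBall_self v r₂) rfl
  by_contra! hlt
  obtain ⟨p, hp⟩ := hG.exists_walk_length_eq_dist u v
  obtain ⟨x, hx, y, hy, hxy⟩ :=
    p.exists_adj_closedBall_of_length_le (hp ▸ hr₁) (show p.length ≤ r₁ + r₂ + 1 by omega)
  exact hedge x hx y hy hxy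

/-- If the balls `B(u,r₁)` and `B(v,r₂)` are disjoint and no edge of `G` joins a vertex of
`B(u,r₁)` to a vertex of `B(v,r₂)`, then `dist(u,v) ≥ r₁ + r₂ + 2`. -/
theorem dist_ge_of_balls_separated {V : Type*} [Fintype V] (G : SimpleGraph V)
    (hG : G.Connected) (u v : V) (r₁ r₂ : ℕ)
    (hdisj : Disjoint (G.closedBall u r₁) (G.closedBall v r₂))
    (hedge : ∀ x ∈ G.closedBall u r₁, ∀ y ∈ G.closedBall v r₂, ¬ G.Adj x y) :
    r₁ + r₂ + 2 ≤ G.dist u v :=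
  dist_ge_of_balls_separated_general G hG u v r₁ r₂ hdisj hedge
end

section
/- Let G be a connected simple graph on a finite nonempty vertex type V whose diameter equals 3h + z, where h, z ∈ ℕ and z ≤ 2. Let s ≥ 1, and suppose N : V → Finset V assigns to each vertex v a set N(v) of s closest vertices to v. Let S ⊆ V satisfy S ∩ N(v) ≠ ∅ for every v ∈ V, and let w ∈ V maximize d_N(w) := max_{x∈N(w)} dist(w,x) over all vertices. Then there exists a vertex x ∈ S ∪ {w} ∪ N(w) such that ecc(x) ≥ 2h + z if z ∈ {0,1}, and ecc(x) ≥ 2h + 1 if z = 2. -/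
/-!
Let `a, b` realise the diameter `D = 3h + z` and put `T = 2h + min z 1`. If every vertex `v`
has `N v` within distance `h`, then the vertex of `S` in `N a` is within `h` of `a`, hence at
distance at least `D - h ≥ T` from `b`. Otherwise, by maximality of `w`, some vertex of `N w` is
farther than `h` from `w`, so `N w` contains every vertex at distance `h` from `w`. Either `w`
itself has eccentricity at least `T`, or it lies within `T - 1` of both `a` and `b`; then the
vertex `c` at distance `h` from `w` on a shortest path to `a` is in `N w`, and
`dist c b ≥ D - (T - 1 - h) ≥ T`.
-/

noncomputable def SimpleGraph.ecc {V : Type*} [Fintype V] (G : SimpleGraph V) (v : V) : ℕ :=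
  Finset.univ.sup (G.dist v)

theorem Finset.mem_of_lt_sup_of_forall_le {α β : Type*} [SemilatticeSup β] [OrderBot β]
    {s : Finset α} {f : α → β} (hs : ∀ x ∈ s, ∀ y ∉ s, f x ≤ f y) {c : α}
    (hc : f c < s.sup f) : c ∈ s := by
  by_contra hcs
  exact hc.not_ge (Finset.sup_le fun x hx => hs x hx c hcs)

namespace SimpleGraph

variable {V : Type*} {G : SimpleGraph V}

theorem dist_le_ecc [Fintype V] (u v : V) : G.dist u v ≤ G.ecc u :=
  Finset.le_sup (Finset.mem_univ v)

namespace Connected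

theorem dist_le_dist_add_ecc [Fintype V] (hG : G.Connected) (a b x : V) :
    G.dist a b ≤ G.dist x a + G.ecc x :=
  calc G.dist a b ≤ G.dist a x + G.dist x b := hG.dist_triangle
    _ ≤ G.dist x a + G.ecc x := by rw [dist_comm]; exact Nat.add_le_add_left (dist_le_ecc x b) _

theorem exists_dist_eq_of_le_dist (hG : G.Connected) {u v : V} {k : ℕ} (hk : k ≤ G.dist u v) :
    ∃ c, G.dist u c = k ∧ G.dist c v = G.dist u v - k := by
  obtain ⟨p, hp⟩ := hG.exists_walk_length_eq_dist u v
  have huc : G.dist u (p.getVert k) ≤ k :=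
    (dist_le (p.take k)).trans (by rw [Walk.take_length]; exact min_le_left _ _)
  have hcv : G.dist (p.getVert k) v ≤ G.dist u v - k :=
    (dist_le (p.drop k)).trans (by rw [Walk.drop_length, hp])
  have htri : G.dist u v ≤ G.dist u (p.getVert k) + G.dist (p.getVert k) v := hG.dist_triangle
  exact ⟨p.getVert k, by omega, by omega⟩

theorem le_ecc_or_exists_dist_eq_le_ecc [Fintype V] (hG : G.Connected) (a b w : V)
    {k T : ℕ} (hk : k + T ≤ G.dist a b) (hT : 2 * T ≤ G.dist a b + k + 1) :
    T ≤ G.ecc w ∨ ∃ c, G.dist w c = k ∧ T ≤ G.ecc c := by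
  refine (le_or_gt T (G.ecc w)).imp_right fun hw => ?_
  have hwa : G.dist w a ≤ G.ecc w := dist_le_ecc w a
  have hwb : G.dist w b ≤ G.ecc w := dist_le_ecc w b
  have htri : G.dist a b ≤ G.dist a w + G.dist w b := hG.dist_triangle
  have hcomm : G.dist a w = G.dist w a := dist_comm
  obtain ⟨c, hwc, hca⟩ := hG.exists_dist_eq_of_le_dist (u := w) (v := a) (k := k) (by omega)
  have hcb := hG.dist_le_dist_add_ecc a b c
  exact ⟨c, hwc, by omega⟩

end Connected

end SimpleGraph

theorem aingworth_estimate_general {V : Type*} [Fintype V]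
    (G : SimpleGraph V) (hG : G.Connected) (h z : ℕ)
    (hdiam : G.diam = 3 * h + z)
    (N : V → Finset V)
    (hNclosest : ∀ v : V, ∀ x ∈ N v, ∀ y ∉ N v, G.dist v x ≤ G.dist v y)
    (S : Finset V) (hS : ∀ v : V, ∃ p ∈ S, p ∈ N v)
    (w : V) (hw : ∀ u : V, (N u).sup (G.dist u) ≤ (N w).sup (G.dist w)) :
    ∃ x : V, (x ∈ S ∨ x = w ∨ x ∈ N w) ∧
      (z ≤ 1 → 2 * h + z ≤ G.ecc x) ∧ (z = 2 → 2 * h + 1 ≤ G.ecc x) := by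
  have : Nonempty V := hG.nonempty
  obtain ⟨a, b, hab⟩ := G.exists_dist_eq_diam
  rw [hdiam] at hab
  suffices ∃ x : V, (x ∈ S ∨ x = w ∨ x ∈ N w) ∧ 2 * h + min z 1 ≤ G.ecc x by
    obtain ⟨x, hx, hecc⟩ := this
    exact ⟨x, hx, fun _ => by omega, fun _ => by omega⟩
  by_cases hsmall : (N w).sup (G.dist w) ≤ h
  · obtain ⟨p, hpS, hpN⟩ := hS a
    have hpa : G.dist p a ≤ h :=
      SimpleGraph.dist_comm.trans_le (((Finset.le_sup hpN).trans (hw a)).trans hsmall)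
    have hbound := hG.dist_le_dist_add_ecc a b p
    exact ⟨p, Or.inl hpS, by omega⟩
  · rcases hG.le_ecc_or_exists_dist_eq_le_ecc a b w (k := h) (T := 2 * h + min z 1) (by omega)
      (by omega) with hecc | ⟨c, hwc, hecc⟩
    · exact ⟨w, Or.inr (Or.inl rfl), hecc⟩
    · have hcN : c ∈ N w := Finset.mem_of_lt_sup_of_forall_le (hNclosest w) (by omega)
      exact ⟨c, Or.inr (Or.inr hcN), hecc⟩

/-- Tightened analysis of the Aingworth–Chekuri–Indyk–Motwani algorithm:
`G` is a connected graph of diameter `3h + z` (`z ≤ 2`), `N v` is a set of `s` closest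
vertices to `v` (for each `v`), `S` hits every `N v`, and `w` maximizes
`d_N(v) = max_{x ∈ N v} dist(v,x)`.  Then some vertex `x` among `S`, `w`, and `N w` has
eccentricity at least `2h + z` when `z ∈ {0,1}`, and at least `2h + 1` when `z = 2`. -/
theorem aingworth_estimate {V : Type*} [Fintype V] [Nonempty V]
    (G : SimpleGraph V) (hG : G.Connected) (h z s : ℕ) (hz : z ≤ 2) (hs : 1 ≤ s)
    (hdiam : G.diam = 3 * h + z)
    (N : V → Finset V) (hNcard : ∀ v : V, (N v).card = s)
    (hNclosest : ∀ v : V, ∀ x ∈ N v, ∀ y ∉ N v, G.dist v x ≤ G.dist v y)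
    (S : Finset V) (hS : ∀ v : V, ∃ p ∈ S, p ∈ N v)
    (w : V) (hw : ∀ u : V, (N u).sup (G.dist u) ≤ (N w).sup (G.dist w)) :
    ∃ x : V, (x ∈ S ∨ x = w ∨ x ∈ N w) ∧
      (z ≤ 1 → 2 * h + z ≤ G.ecc x) ∧ (z = 2 → 2 * h + 1 ≤ G.ecc x) :=
  aingworth_estimate_general G hG h z hdiam N hNclosest S hS w hw
end

section
/- Let G be a connected simple graph on a finite nonempty vertex type V whose diameter equals 3h + z, where h, z ∈ ℕ and z ≤ 2. Let H ⊆ V be nonempty, let w ∈ V satisfy dist(w,H) ≥ dist(u,H) for every u ∈ V, where dist(v,H) = min_{p∈H} dist(v,p). Let h̃ ∈ ℕ with h̃ ≥ h and set h' = min(h̃ + 1, dist(w,H)). Then there exists a vertex x ∈ H ∪ {w} ∪ B(w,h') with ecc(x) ≥ 2h + z. (Moreover ecc(x) ≤ 3h + z for every vertex x.) -/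
private lemma dist_getVert_left {V : Type*} (G : SimpleGraph V) {u v : V}
    (hG : G.Connected) (p : G.Walk u v) (n : ℕ) : G.dist u (p.getVert n) ≤ n := by
  induction p generalizing n with
  | nil => simp [SimpleGraph.Walk.getVert, SimpleGraph.dist_self]
  | @cons a b c hab q ih =>
    cases n with
    | zero => simp [SimpleGraph.Walk.getVert_zero]
    | succ n =>
      rw [SimpleGraph.Walk.getVert_cons_succ]
      calc G.dist a (q.getVert n) ≤ G.dist a b + G.dist b (q.getVert n) :=
            hG.dist_triangle
        _ ≤ 1 + n := by
            gcongr
            · exact le_trans (SimpleGraph.dist_le (SimpleGraph.Walk.cons hab SimpleGraph.Walk.nil))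
                (by simp)
            · exact ih n
        _ = n + 1 := by omega

private lemma dist_getVert_right {V : Type*} (G : SimpleGraph V) {u v : V}
    (p : G.Walk u v) (n : ℕ) : G.dist (p.getVert n) v ≤ p.length - n := by
  induction p generalizing n with
  | nil => simp [SimpleGraph.Walk.getVert]
  | @cons a b c hab q ih =>
    cases n with
    | zero =>
      simpa [SimpleGraph.Walk.getVert_zero] using
        SimpleGraph.dist_le (SimpleGraph.Walk.cons hab q)
    | succ n =>
      rw [SimpleGraph.Walk.getVert_cons_succ]
      simpa using ih n

/-- Combinatorial core of Lemma 6.1 (correctness of Approx-Diam-Sparse): `G` is a connected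
graph of diameter `3h + z` (`z ≤ 2`), `H` a nonempty set of vertices, `w` a vertex farthest
from `H`, `h̃ ≥ h`, and `h' = min(h̃ + 1, dist(w,H))`.  Then some vertex `x` among `H`, `w`,
and the ball `B(w,h')` has eccentricity at least `2h + z`; moreover every vertex has
eccentricity at most `3h + z`. -/
theorem approx_diam_sparse_estimate {V : Type*} [Fintype V] [Nonempty V]
    (G : SimpleGraph V) (hG : G.Connected) (h z : ℕ) (hz : z ≤ 2)
    (hdiam : G.diam = 3 * h + z)
    (H : Finset V) (hH : H.Nonempty) (w : V)
    (hw : ∀ u : V, H.inf' hH (G.dist u) ≤ H.inf' hH (G.dist w))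
    (htilde : ℕ) (hht : h ≤ htilde)
    (h' : ℕ) (hh' : h' = min (htilde + 1) (H.inf' hH (G.dist w))) :
    (∃ x : V, (x ∈ H ∨ x = w ∨ G.dist w x ≤ h') ∧ 2 * h + z ≤ G.ecc x) ∧
      ∀ x : V, G.ecc x ≤ 3 * h + z := by
  have hne : G.ediam ≠ ⊤ := by
    obtain ⟨u, v, huv⟩ := G.exists_edist_eq_ediam_of_finite
    rw [← huv]
    exact SimpleGraph.edist_ne_top_iff_reachable.mpr (hG u v)
  have hub : ∀ x : V, G.ecc x ≤ 3 * h + z := by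
    intro x
    refine Finset.sup_le fun y _ => ?_
    rw [← hdiam]
    exact G.dist_le_diam hne
  refine ⟨?_, hub⟩
  have ecc_ge : ∀ x y : V, G.dist x y ≤ G.ecc x := fun x y =>
    Finset.le_sup (Finset.mem_univ y)
  obtain ⟨a, b, hab⟩ := G.exists_dist_eq_diam
  rw [hdiam] at hab
  set m := H.inf' hH (G.dist w) with hm
  rcases le_or_gt m h with hcase | hcase
  · -- Case A: dist(w,H) ≤ h; the closest vertex of H to a works.
    obtain ⟨p, hpH, hpa⟩ := Finset.exists_mem_eq_inf' hH (G.dist a)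
    have hap : G.dist a p ≤ h := hpa ▸ le_trans (hw a) hcase
    refine ⟨p, Or.inl hpH, ?_⟩
    have htri : G.dist a b ≤ G.dist a p + G.dist p b := hG.dist_triangle
    have h1 : G.dist p b ≤ G.ecc p := ecc_ge p b
    omega
  · -- Case B: dist(w,H) ≥ h + 1, hence h' ≥ h + 1.
    have hh'ge : h + 1 ≤ h' := by
      rw [hh']
      exact le_min (by omega) hcase
    rcases le_or_gt (2 * h + z) (G.dist w a) with hwa | hwa
    · exact ⟨w, Or.inr (Or.inl rfl), le_trans hwa (ecc_ge w a)⟩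
    · obtain ⟨p, hp⟩ := hG.exists_walk_length_eq_dist w a
      set n := min h' (G.dist w a) with hn
      refine ⟨p.getVert n, Or.inr (Or.inr ?_), ?_⟩
      · exact le_trans (dist_getVert_left G hG p n) (min_le_left _ _)
      · have h2 : G.dist (p.getVert n) a ≤ G.dist w a - n := by
          have := dist_getVert_right G p n
          rwa [hp] at this
        have htri : G.dist a b ≤ G.dist a (p.getVert n) + G.dist (p.getVert n) b :=
          hG.dist_triangle
        have hcm : G.dist a (p.getVert n) = G.dist (p.getVert n) a := SimpleGraph.dist_comm
        have h3 : G.dist (p.getVert n) b ≤ G.ecc (p.getVert n) := ecc_ge _ b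
        omega
end

section
/- Let G be a simple graph on a finite nonempty vertex type V and let k ≥ 1. Suppose no k-element subset of V is a dominating set of G. Then in the graph G' of the dominating-set-to-diameter reduction, every two vertices are at distance at most 3; in particular G' is connected and its diameter is at most 3. -/
/-- `S` dominates `v` in `G` if `v ∈ S` or some element of `S` is adjacent to `v`. -/
def SimpleGraph.DominatesVert {V : Type*} (G : SimpleGraph V) (S : Finset V) (v : V) : Prop :=
  v ∈ S ∨ ∃ u ∈ S, G.Adj u v

/-- `S` is a dominating set of `G` if it dominates every vertex. -/
def SimpleGraph.IsDominatingSet {V : Type*} (G : SimpleGraph V) (S : Finset V) : Prop :=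
  ∀ v : V, G.DominatesVert S v

/-- The dominating-set-to-diameter reduction graph `G'`: its vertices are the `k`-element
subsets of `V` together with the elements of `V`; the elements of `V` form a clique; a
`k`-subset `S` is adjacent to a vertex `v ∈ V` iff `S` does not dominate `v`; two `k`-subsets
are never adjacent. -/
def SimpleGraph.reductionGraph {V : Type*} (G : SimpleGraph V) (k : ℕ) :
    SimpleGraph ({A : Finset V // A.card = k} ⊕ V) where
  Adj x y :=
    match x, y with
    | Sum.inl _, Sum.inl _ => False
    | Sum.inl S, Sum.inr v => ¬ G.DominatesVert S.1 v
    | Sum.inr v, Sum.inl S => ¬ G.DominatesVert S.1 v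
    | Sum.inr u, Sum.inr v => u ≠ v
  symm := by
    constructor
    rintro (S | u) (T | v) hadj
    · exact hadj
    · exact hadj
    · exact hadj
    · exact hadj.symm
  loopless := by
    constructor
    rintro (S | u) hadj
    · exact hadj
    · exact hadj rfl

/-! Every `k`-subset `S` fails to dominate some vertex `w`, so `S` is adjacent to `w` in `G'`.
As `V` is a clique in `G'`, this gives paths `S – w – v`, and
`S – w – w' – T` with `w'` a vertex that `T` fails to dominate. -/

namespace SimpleGraph

variable {V : Type*} (G : SimpleGraph V) (k : ℕ)

theorem reductionGraph_adj_inr_inr {u v : V} :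
    (G.reductionGraph k).Adj (.inr u) (.inr v) ↔ u ≠ v :=
  Iff.rfl

theorem reductionGraph_reachable_inr_inr (u v : V) :
    (G.reductionGraph k).Reachable (.inr u) (.inr v) := by
  rcases eq_or_ne u v with rfl | huv
  · rfl
  · exact ((G.reductionGraph_adj_inr_inr k).mpr huv).reachable

theorem reductionGraph_dist_inr_inr_le_one (u v : V) :
    (G.reductionGraph k).dist (.inr u) (.inr v) ≤ 1 := by
  rcases eq_or_ne u v with rfl | huv
  · simp
  · exact (dist_eq_one_iff_adj.mpr ((G.reductionGraph_adj_inr_inr k).mpr huv)).le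

variable {G k}

theorem exists_reductionGraph_adj_inl_inr {S : {A : Finset V // A.card = k}}
    (hS : ¬ G.IsDominatingSet S.1) : ∃ v, (G.reductionGraph k).Adj (.inl S) (.inr v) :=
  not_forall.mp hS

theorem reductionGraph_dist_inl_inr_le_two {S : {A : Finset V // A.card = k}}
    (hS : ¬ G.IsDominatingSet S.1) (v : V) :
    (G.reductionGraph k).dist (.inl S) (.inr v) ≤ 2 := by
  obtain ⟨w, hw⟩ := exists_reductionGraph_adj_inl_inr hS
  calc (G.reductionGraph k).dist (.inl S) (.inr v)
      ≤ (G.reductionGraph k).dist (.inl S) (.inr w) +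
          (G.reductionGraph k).dist (.inr w) (.inr v) := hw.reachable.dist_triangle_left _
    _ ≤ 1 + 1 := add_le_add (dist_eq_one_iff_adj.mpr hw).le
        (G.reductionGraph_dist_inr_inr_le_one k w v)

theorem reductionGraph_dist_inl_inl_le_three {S T : {A : Finset V // A.card = k}}
    (hS : ¬ G.IsDominatingSet S.1) (hT : ¬ G.IsDominatingSet T.1) :
    (G.reductionGraph k).dist (.inl S) (.inl T) ≤ 3 := by
  obtain ⟨w, hw⟩ := exists_reductionGraph_adj_inl_inr hS
  calc (G.reductionGraph k).dist (.inl S) (.inl T)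
      ≤ (G.reductionGraph k).dist (.inl S) (.inr w) +
          (G.reductionGraph k).dist (.inr w) (.inl T) := hw.reachable.dist_triangle_left _
    _ ≤ 1 + 2 := add_le_add (dist_eq_one_iff_adj.mpr hw).le
        (dist_comm.trans_le (reductionGraph_dist_inl_inr_le_two hT w))

theorem reductionGraph_connected [Nonempty V]
    (hno : ∀ S : {A : Finset V // A.card = k}, ¬ G.IsDominatingSet S.1) :
    (G.reductionGraph k).Connected := by
  obtain ⟨v₀⟩ := ‹Nonempty V›
  have hreach : ∀ x, (G.reductionGraph k).Reachable x (.inr v₀) := by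
    rintro (S | u)
    · obtain ⟨w, hw⟩ := exists_reductionGraph_adj_inl_inr (hno S)
      exact hw.reachable.trans (G.reductionGraph_reachable_inr_inr k w v₀)
    · exact G.reductionGraph_reachable_inr_inr k u v₀
  exact ⟨fun x y => (hreach x).trans (hreach y).symm⟩

end SimpleGraph

theorem reduction_dist_le_three_general {V : Type*} [Nonempty V]
    (G : SimpleGraph V) (k : ℕ)
    (hno : ∀ A : Finset V, A.card = k → ¬ G.IsDominatingSet A) :
    (G.reductionGraph k).Connected ∧
      ∀ x y : {A : Finset V // A.card = k} ⊕ V, (G.reductionGraph k).dist x y ≤ 3 := by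
  have hnotDom : ∀ S : {A : Finset V // A.card = k}, ¬ G.IsDominatingSet S.1 :=
    fun S => hno S.1 S.2
  refine ⟨SimpleGraph.reductionGraph_connected hnotDom, ?_⟩
  rintro (S | u) (T | v)
  · exact SimpleGraph.reductionGraph_dist_inl_inl_le_three (hnotDom S) (hnotDom T)
  · exact (SimpleGraph.reductionGraph_dist_inl_inr_le_two (hnotDom S) v).trans (by norm_num)
  · exact SimpleGraph.dist_comm.trans_le
      ((SimpleGraph.reductionGraph_dist_inl_inr_le_two (hnotDom T) u).trans (by norm_num))
  · exact (G.reductionGraph_dist_inr_inr_le_one k u v).trans (by norm_num)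

/-- If no `k`-element subset of `V` is a dominating set of `G`, then any two vertices of the
reduction graph `G'` are at distance at most `3`; in particular `G'` is connected (and its
diameter is at most `3`). -/
theorem reduction_dist_le_three {V : Type*} [Fintype V] [DecidableEq V] [Nonempty V]
    (G : SimpleGraph V) (k : ℕ) (hk : 1 ≤ k)
    (hno : ∀ A : Finset V, A.card = k → ¬ G.IsDominatingSet A) :
    (G.reductionGraph k).Connected ∧
      ∀ x y : {A : Finset V // A.card = k} ⊕ V, (G.reductionGraph k).dist x y ≤ 3 :=
  reduction_dist_le_three_general G k hno
end

section
/- Let G be a simple graph on a finite vertex type V, let k ≥ 1, and suppose no k-element subset of V is a dominating set of G. If S and T are k-element subsets of V such that S ∪ T is NOT a dominating set of G, then the distance between S and T in the reduction graph G' is exactly 2 when S ≠ T (and 0 when S = T). -/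
/-! A vertex `v ∈ V` dominated by neither `S` nor `T` is a common neighbour of `S` and `T` in the
reduction graph, while two `k`-subsets are never adjacent; so distinct `S`, `T` are at distance 2. -/

namespace SimpleGraph

variable {V : Type*} (G : SimpleGraph V)

theorem dist_eq_two_iff {u v : V} :
    G.dist u v = 2 ↔ u ≠ v ∧ ¬ G.Adj u v ∧ (G.commonNeighbors u v).Nonempty := by
  rw [dist, ENat.toNat_eq_iff two_ne_zero, Nat.cast_ofNat, edist_eq_two_iff]

theorem dominatesVert_union [DecidableEq V] {S T : Finset V} {v : V} :
    G.DominatesVert (S ∪ T) v ↔ G.DominatesVert S v ∨ G.DominatesVert T v := by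
  simp only [DominatesVert, Finset.mem_union, or_and_right, exists_or]
  exact or_or_or_comm

variable {G} {k : ℕ}

@[simp]
theorem reductionGraph_adj_inl_inr {S : {A : Finset V // A.card = k}} {v : V} :
    (G.reductionGraph k).Adj (.inl S) (.inr v) ↔ ¬ G.DominatesVert S.1 v :=
  Iff.rfl

@[simp]
theorem reductionGraph_not_adj_inl_inl (S T : {A : Finset V // A.card = k}) :
    ¬ (G.reductionGraph k).Adj (.inl S) (.inl T) :=
  id

theorem reductionGraph_dist_inl_eq_two {S T : {A : Finset V // A.card = k}} {v : V}
    (hST : S ≠ T) (hS : ¬ G.DominatesVert S.1 v) (hT : ¬ G.DominatesVert T.1 v) :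
    (G.reductionGraph k).dist (.inl S) (.inl T) = 2 :=
  (dist_eq_two_iff _).mpr
    ⟨Sum.inl_injective.ne hST, reductionGraph_not_adj_inl_inl S T, .inr v,
      reductionGraph_adj_inl_inr.mpr hS, reductionGraph_adj_inl_inr.mpr hT⟩

end SimpleGraph

theorem reduction_dist_eq_two_of_union_not_dominating_general {V : Type*} [DecidableEq V]
    (G : SimpleGraph V) (k : ℕ)
    (S T : Finset V) (hS : S.card = k) (hT : T.card = k)
    (hdom : ¬ G.IsDominatingSet (S ∪ T)) :
    (S ≠ T → (G.reductionGraph k).dist (Sum.inl ⟨S, hS⟩) (Sum.inl ⟨T, hT⟩) = 2) ∧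
      (S = T → (G.reductionGraph k).dist (Sum.inl ⟨S, hS⟩) (Sum.inl ⟨T, hT⟩) = 0) := by
  obtain ⟨v, hv⟩ := not_forall.mp hdom
  obtain ⟨hSv, hTv⟩ := not_or.mp (G.dominatesVert_union.not.mp hv)
  refine ⟨fun hST ↦ ?_, fun hST ↦ ?_⟩
  · exact SimpleGraph.reductionGraph_dist_inl_eq_two (Subtype.ext_iff.not.mpr hST) hSv hTv
  · subst hST
    exact SimpleGraph.dist_self

/-- If no `k`-element subset of `V` is a dominating set of `G`, and `S`, `T` are `k`-element
subsets whose union is NOT a dominating set of `G`, then the distance between `S` and `T` in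
the reduction graph `G'` is exactly `2` when `S ≠ T` (and `0` when `S = T`). -/
theorem reduction_dist_eq_two_of_union_not_dominating {V : Type*} [Fintype V] [DecidableEq V]
    (G : SimpleGraph V) (k : ℕ) (hk : 1 ≤ k)
    (hno : ∀ A : Finset V, A.card = k → ¬ G.IsDominatingSet A)
    (S T : Finset V) (hS : S.card = k) (hT : T.card = k)
    (hdom : ¬ G.IsDominatingSet (S ∪ T)) :
    (S ≠ T → (G.reductionGraph k).dist (Sum.inl ⟨S, hS⟩) (Sum.inl ⟨T, hT⟩) = 2) ∧
      (S = T → (G.reductionGraph k).dist (Sum.inl ⟨S, hS⟩) (Sum.inl ⟨T, hT⟩) = 0) :=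
  reduction_dist_eq_two_of_union_not_dominating_general G k S T hS hT hdom
end
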